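/- If v is a factor of w having period q with |v| ≥ q + 3, then 3 divides q. -/

import Mathlib

/-- The four-letter alphabet `A₄ = {1,2,3,4}`; the value `k : Fin 4` represents letter `k+1`. -/
abbrev A4 := Fin 4

/-- The morphism `f` on letters: `f(1)=121, f(2)=123, f(3)=141, f(4)=142`
(letters `1,2,3,4` encoded as `0,1,2,3`). -/
def fm : A4 → List A4
  | 0 => [0, 1, 0]
  | 1 => [0, 1, 2]
  | 2 => [0, 3, 0]
  | 3 => [0, 3, 1]

/-- The morphism `f` extended to words by concatenation. -/
def fw (u : List A4) : List A4 := u.flatMap fm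

/-- The fixed point `w` of `f` starting with the letter `1`: since `|f^k(1)| = 3^k` and each
`f^k(1)` is a prefix of `f^(k+1)(1)`, the `n`-th letter of `w` is the `n`-th letter of
`f^(n+1)(1)`. -/
def w (n : ℕ) : A4 := ((fw^[n + 1]) [0]).getD n 0

/-- The finite word `t` occurs at position `i` in the infinite word `x`. -/
def OccursAt {α : Type*} (t : List α) (x : ℕ → α) (i : ℕ) : Prop :=
  t = (List.range t.length).map fun k => x (i + k)

/-- The finite word `v` is a factor of the infinite word `x`. -/
def FactorOf {α : Type*} (v : List α) (x : ℕ → α) : Prop :=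
  ∃ i, OccursAt v x i

/-- The finite word `v` has period `q ≥ 1`: `v(j) = v(j+q)` whenever `0 ≤ j < |v| - q`. -/
def HasPeriod {α : Type*} (v : List α) (q : ℕ) : Prop :=
  1 ≤ q ∧ ∀ j, j + q < v.length → v[j]? = v[j + q]?

/-- A word lies in `ker ψ` if each letter of `A₄` occurs in it a number of times
divisible by `4`. -/
def InKerPsi (u : List A4) : Prop := ∀ a : A4, 4 ∣ u.count a

/-- `q` is a kernel period of `v`: `1 ≤ q ≤ |v|`, `v` has period `q`, and the prefix of `v`
of length `q` lies in `ker ψ`. -/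
def KernelPeriod (v : List A4) (q : ℕ) : Prop :=
  q ≤ v.length ∧ HasPeriod v q ∧ InKerPsi (v.take q)

/-!
Since `f` is 3-uniform and each image `f(a)` begins with `1` and has middle letter `2` or `4`,
the letter `1` occurs in `w` at every position `≡ 0 (mod 3)` and at no position `≡ 1 (mod 3)`.
Among three consecutive positions of an occurrence of `v` one lies in each class, and if
`3 ∤ q` the shift by the period `q` carries one of these two classes onto the other.
-/

lemma fm_length (a : A4) : (fm a).length = 3 := by
  fin_cases a <;> rfl

lemma fw_cons (a : A4) (u : List A4) : fw (a :: u) = fm a ++ fw u :=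
  List.flatMap_cons

lemma fw_length (u : List A4) : (fw u).length = 3 * u.length := by
  induction u with
  | nil => rfl
  | cons a u ih => rw [fw_cons, List.length_append, fm_length, ih, List.length_cons]; ring

lemma length_iterate_fw (k : ℕ) : (fw^[k] [0]).length = 3 ^ k := by
  induction k with
  | zero => rfl
  | succ k ih => rw [Function.iterate_succ_apply', fw_length, ih, pow_succ, mul_comm]

lemma getElem?_fw (u : List A4) (m : ℕ) {r : ℕ} (hr : r < 3) :
    (fw u)[3 * m + r]? = u[m]?.bind fun a => (fm a)[r]? := by
  induction u generalizing m with
  | nil => rfl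
  | cons a u ih =>
    rw [fw_cons]
    cases m with
    | zero => simp [List.getElem?_append_left, fm_length, hr]
    | succ m =>
      rw [List.getElem?_append_right (by rw [fm_length]; omega), fm_length,
        show 3 * (m + 1) + r - 3 = 3 * m + r by omega, ih, List.getElem?_cons_succ]

lemma exists_getElem?_fm_eq_w (n : ℕ) : ∃ a, (fm a)[n % 3]? = some (w n) := by
  have hn : n / 3 < (fw^[n] [0]).length := by
    rw [length_iterate_fw]
    exact (Nat.div_le_self n 3).trans_lt (Nat.lt_pow_self (by norm_num))
  have hw : some (w n) = (fw (fw^[n] [0]))[3 * (n / 3) + n % 3]? := by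
    rw [Nat.div_add_mod, w, Function.iterate_succ_apply', List.getD_eq_getElem?_getD,
      List.getElem?_eq_getElem (by rw [fw_length]; omega), Option.getD_some]
  rw [getElem?_fw _ _ (Nat.mod_lt n (by norm_num)), List.getElem?_eq_getElem hn,
    Option.bind_some] at hw
  exact ⟨_, hw.symm⟩

lemma w_eq_zero_of_mod_three_eq_zero {n : ℕ} (h : n % 3 = 0) : w n = 0 := by
  obtain ⟨a, ha⟩ := exists_getElem?_fm_eq_w n
  rw [h] at ha
  fin_cases a <;> simpa [fm] using ha.symm

lemma w_ne_zero_of_mod_three_eq_one {n : ℕ} (h : n % 3 = 1) : w n ≠ 0 := by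
  obtain ⟨a, ha⟩ := exists_getElem?_fm_eq_w n
  rw [h] at ha
  fin_cases a <;> simp [fm] at ha <;> simp [← ha]

lemma OccursAt.getElem?_eq {α : Type*} {t : List α} {x : ℕ → α} {i j : ℕ}
    (h : OccursAt t x i) (hj : j < t.length) : t[j]? = some (x (i + j)) := by
  rw [h]
  simp [List.getElem?_range hj]

lemma OccursAt.apply_add_period {α : Type*} {t : List α} {x : ℕ → α} {i q j : ℕ}
    (h : OccursAt t x i) (hper : HasPeriod t q) (hj : j + q < t.length) :
    x (i + j) = x (i + j + q) := by
  have := hper.2 j hj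
  rwa [h.getElem?_eq (by omega), h.getElem?_eq hj, Option.some_inj, ← add_assoc] at this

lemma three_dvd_of_apply_eq_apply_add {α : Type*} (x : ℕ → α) (c : α)
    (h₀ : ∀ n, n % 3 = 0 → x n = c) (h₁ : ∀ n, n % 3 = 1 → x n ≠ c) (i q : ℕ)
    (hshift : ∀ j < 3, x (i + j) = x (i + j + q)) : 3 ∣ q := by
  rcases (by omega : q % 3 = 0 ∨ q % 3 = 1 ∨ q % 3 = 2) with hq | hq | hq
  · exact Nat.dvd_of_mod_eq_zero hq
  · obtain ⟨j, hj, hij⟩ : ∃ j < 3, (i + j) % 3 = 0 := ⟨(3 - i % 3) % 3, by omega, by omega⟩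
    exact absurd (hshift j hj ▸ h₀ _ hij) (h₁ _ (by omega))
  · obtain ⟨j, hj, hij⟩ : ∃ j < 3, (i + j) % 3 = 1 := ⟨(4 - i % 3) % 3, by omega, by omega⟩
    exact absurd ((hshift j hj).trans (h₀ _ (by omega))) (h₁ _ hij)

/-- If `v` is a factor of `w` having period `q` with `|v| ≥ q + 3`, then `3 ∣ q`. -/
theorem stmt9 (v : List A4) (q : ℕ) (hfac : FactorOf v w) (hper : HasPeriod v q)
    (hlen : q + 3 ≤ v.length) : 3 ∣ q := by
  obtain ⟨i, hocc⟩ := hfac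
  exact three_dvd_of_apply_eq_apply_add w 0 (fun _ => w_eq_zero_of_mod_three_eq_zero)
    (fun _ => w_ne_zero_of_mod_three_eq_one) i q
    fun j hj => hocc.apply_add_period hper (by omega)
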